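/- arXiv:2602.16096 — 13 statements merged into one kernel-verified Lean document; each statement's English description precedes it below -/
import Mathlib

section
/- Let (a_n)_{n≥0} be a sequence of real numbers and let q be a real number. For every natural number n, the Bernoulli transform satisfies S_n(q) = Σ_{j=0}^{n} (-1)^j C(n,j) M(n,j) q^j, where M(n,j) = Σ_{l=0}^{j} (-1)^l C(j,l) a_{n-l} (note that n - l ≥ 0 since l ≤ j ≤ n). -/
open Finset

/-!
Reading the sum from the top index, `S_n(q) = ∑ₗ a_{n-l} C(n,l) qˡ (1-q)ⁿ⁻ˡ` is the Bernstein
form with coefficients `bₗ = a_{n-l}`. Expanding `(1-q)ⁿ⁻ˡ` binomially and collecting powers of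
`q` along the diagonals `j = l + t` turns it into `∑ⱼ C(n,j) (Δʲ b)₀ qʲ`, since
`C(n,l) C(n-l,j-l) = C(n,j) C(j,l)`; finally `(Δʲ b)₀ = (-1)ʲ M(n,j)`.
-/

section CommRing

variable {R : Type*} [CommRing R]

theorem neg_one_pow_sub_eq_mul {l j : ℕ} (hlj : l ≤ j) :
    (-1 : R) ^ (j - l) = (-1) ^ j * (-1) ^ l := by
  rw [← pow_sub_mul_pow (-1 : R) hlj, mul_assoc, ← mul_pow, neg_one_mul, neg_neg, one_pow,
    mul_one]

theorem one_sub_pow_eq_sum (q : R) (m : ℕ) :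
    (1 - q) ^ m = ∑ t ∈ range (m + 1), (m.choose t : R) * (-q) ^ t := by
  rw [sub_eq_neg_add, add_pow]
  exact sum_congr rfl fun t _ => by rw [one_pow, mul_one, mul_comm]

theorem sum_bernstein_eq_sum_fwdDiff_mul_pow (b : ℕ → R) (q : R) (n : ℕ) :
    ∑ l ∈ range (n + 1), b l * n.choose l * q ^ l * (1 - q) ^ (n - l) =
      ∑ j ∈ range (n + 1),
        n.choose j * (∑ l ∈ range (j + 1), (-1) ^ (j - l) * j.choose l * b l) * q ^ j := by
  set F : ℕ → ℕ → R := fun l t => b l * n.choose l * (n - l).choose t * q ^ l * (-q) ^ t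
  calc ∑ l ∈ range (n + 1), b l * n.choose l * q ^ l * (1 - q) ^ (n - l)
      = ∑ l ∈ range (n + 1), ∑ t ∈ range (n + 1 - l), F l t := by
        refine sum_congr rfl fun l hl => ?_
        rw [Nat.sub_add_comm (mem_range_succ_iff.mp hl), one_sub_pow_eq_sum, mul_sum]
        exact sum_congr rfl fun t _ => by ring
    _ = ∑ j ∈ range (n + 1), ∑ l ∈ range (j + 1), F l (j - l) :=
        (sum_range_diag_flip _ F).symm
    _ = _ := by
        refine sum_congr rfl fun j _ => ?_
        rw [mul_sum, sum_mul]
        refine sum_congr rfl fun l hl => ?_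
        have hlj : l ≤ j := mem_range_succ_iff.mp hl
        have hchoose :
            (n.choose l : R) * ((n - l).choose (j - l) : R) = n.choose j * j.choose l := by
          exact_mod_cast congrArg (Nat.cast : ℕ → R) (Nat.choose_mul hlj).symm
        calc F l (j - l)
            = (-1) ^ (j - l) * (n.choose l * (n - l).choose (j - l)) * b l *
                (q ^ l * q ^ (j - l)) := by
              simp only [F, neg_pow q]
              ring
          _ = _ := by
              rw [hchoose, ← pow_add, Nat.add_sub_cancel' hlj]
              ring

end CommRing

theorem bernoulli_transform_basis (a : ℕ → ℝ) (q : ℝ) (n : ℕ) :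
    ∑ k ∈ range (n + 1), a k * (n.choose k : ℝ) * (1 - q) ^ k * q ^ (n - k) =
      ∑ j ∈ range (n + 1), (-1 : ℝ) ^ j * (n.choose j : ℝ) *
        (∑ l ∈ range (j + 1), (-1 : ℝ) ^ l * (j.choose l : ℝ) * a (n - l)) * q ^ j := by
  have reflect : ∑ k ∈ range (n + 1), a k * (n.choose k : ℝ) * (1 - q) ^ k * q ^ (n - k) =
      ∑ l ∈ range (n + 1), a (n - l) * (n.choose l : ℝ) * q ^ l * (1 - q) ^ (n - l) := by
    rw [← sum_range_reflect]
    refine sum_congr rfl fun l hl => ?_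
    have hln : l ≤ n := mem_range_succ_iff.mp hl
    rw [Nat.add_sub_cancel, Nat.sub_sub_self hln, Nat.choose_symm hln]
    ring
  rw [reflect, sum_bernstein_eq_sum_fwdDiff_mul_pow (fun l => a (n - l))]
  refine sum_congr rfl fun j _ => ?_
  have hdiff : ∑ l ∈ range (j + 1), (-1 : ℝ) ^ (j - l) * j.choose l * a (n - l) =
      (-1) ^ j * ∑ l ∈ range (j + 1), (-1 : ℝ) ^ l * j.choose l * a (n - l) := by
    rw [mul_sum]
    refine sum_congr rfl fun l hl => ?_
    rw [neg_one_pow_sub_eq_mul (mem_range_succ_iff.mp hl)]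
    ring
  rw [hdiff]
  ring
end

section
/- Let F_n denote the Fibonacci numbers (F_0 = 0, F_1 = 1, F_{n+2} = F_{n+1} + F_n). For all natural numbers n and r with r ≥ n, and every real number q, Σ_{k=0}^{n} F_{k+r} C(n,k) (1-q)^k q^{n-k} = Σ_{j=0}^{n} (-1)^j C(n,j) F_{n+r-2j} q^j (note that n + r - 2j ≥ 0 for 0 ≤ j ≤ n since r ≥ n). -/
/-!
By Binet's formula it suffices to prove the identity with `F_m` replaced by `x ^ m` for a root `x`
of `x² = x + 1`. Then `x (x - 1) = 1` gives `x (1 - q) + q = (x - 1) (x² - q)`, so the left side is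
`x ^ r (x (1 - q) + q) ^ n = (x² - q) ^ n x ^ (r - n)`, whose binomial expansion is the right side.
-/

open Finset

theorem bernoulli_transform_pow_of_sq_eq_add_one {R : Type*} [CommRing R] {x : R}
    (hx : x ^ 2 = x + 1) (q : R) {n r : ℕ} (hnr : n ≤ r) :
    ∑ k ∈ range (n + 1), x ^ (k + r) * (n.choose k : R) * (1 - q) ^ k * q ^ (n - k) =
      ∑ j ∈ range (n + 1), (-1 : R) ^ j * (n.choose j : R) * x ^ (n + r - 2 * j) * q ^ j := by
  have hfactor : x * (1 - q) + q = (x - 1) * (x ^ 2 - q) := by linear_combination (-x) * hx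
  have hunit : (x - 1) * x = 1 := by linear_combination hx
  calc ∑ k ∈ range (n + 1), x ^ (k + r) * (n.choose k : R) * (1 - q) ^ k * q ^ (n - k)
      = (x * (1 - q) + q) ^ n * x ^ r := by
        rw [add_pow, sum_mul]
        exact sum_congr rfl fun k _ => by rw [mul_pow, pow_add]; ring
    _ = ((x - 1) * x) ^ n * (-q + x ^ 2) ^ n * x ^ (r - n) := by
        rw [hfactor, ← pow_mul_pow_sub x hnr, mul_pow, mul_pow, neg_add_eq_sub]
        ring
    _ = ∑ j ∈ range (n + 1), (-1 : R) ^ j * (n.choose j : R) * x ^ (n + r - 2 * j) * q ^ j := by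
        rw [hunit, one_pow, one_mul, add_pow, sum_mul]
        refine sum_congr rfl fun j hj => ?_
        have hjn : j ≤ n := Nat.lt_succ_iff.mp (mem_range.mp hj)
        rw [show n + r - 2 * j = 2 * (n - j) + (r - n) by omega, pow_add, pow_mul, neg_pow]
        ring

theorem fibonacci_bernoulli_transform (n r : ℕ) (hrn : r ≥ n) (q : ℝ) :
    ∑ k ∈ range (n + 1), (Nat.fib (k + r) : ℝ) * (n.choose k : ℝ) * (1 - q) ^ k * q ^ (n - k) =
      ∑ j ∈ range (n + 1), (-1 : ℝ) ^ j * (n.choose j : ℝ) * (Nat.fib (n + r - 2 * j) : ℝ) * q ^ j := by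
  have hφ := bernoulli_transform_pow_of_sq_eq_add_one Real.goldenRatio_sq q hrn
  have hψ := bernoulli_transform_pow_of_sq_eq_add_one Real.goldenConj_sq q hrn
  -- split Binet's quotient here: `ψ` is an abbrev for `(1 - √5) / 2`, so `sub_div` in `simp` would unfold it
  have hbinet (m : ℕ) : (Nat.fib m : ℝ) = Real.goldenRatio ^ m / √5 - Real.goldenConj ^ m / √5 := by
    rw [Real.coe_fib_eq, sub_div]
  simp only [hbinet, sub_mul, mul_sub, sum_sub_distrib, div_mul_eq_mul_div, mul_div_assoc', ← sum_div]
  rw [hφ, hψ]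
end

section
/- Let L_n denote the Lucas numbers (L_0 = 2, L_1 = 1, L_{n+2} = L_{n+1} + L_n). For all natural numbers n and r with r ≥ n, and every real number q, Σ_{k=0}^{n} L_{k+r} C(n,k) (1-q)^k q^{n-k} = Σ_{j=0}^{n} (-1)^j C(n,j) L_{n+r-2j} q^j (note that n + r - 2j ≥ 0 for 0 ≤ j ≤ n since r ≥ n). -/
/-!
Both sides are linear in the sequence, and every real sequence with the Fibonacci recursion is a
combination of `φ ^ m` and `ψ ^ m`, so it suffices to treat `u m = α ^ m` with `α ^ 2 = α + 1`.
By the binomial theorem the two sides are then `α ^ r ((1 - q) α + q) ^ n` and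
`α ^ (r - n) (α ^ 2 - q) ^ n`, which agree because
`α ((1 - q) α + q) = α ^ 2 - q (α ^ 2 - α) = α ^ 2 - q`.
-/

open Finset

open scoped goldenRatio

section Geometric

variable {R : Type*} [CommRing R] {α : R} {n r : ℕ}

theorem pow_mul_one_sub_mul_add_pow_eq_of_sq_eq_add_one (hα : α ^ 2 = α + 1) (hrn : n ≤ r)
    (q : R) :
    α ^ r * ((1 - q) * α + q) ^ n = α ^ (r - n) * (α ^ 2 - q) ^ n := by
  have hmul : α * ((1 - q) * α + q) = α ^ 2 - q := by linear_combination (-q) * hα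
  rw [← hmul, mul_pow, ← mul_assoc, ← pow_add, Nat.sub_add_cancel hrn]

theorem sum_pow_mul_choose_one_sub_pow_eq_of_sq_eq_add_one (hα : α ^ 2 = α + 1) (hrn : n ≤ r)
    (q : R) :
    ∑ k ∈ range (n + 1), α ^ (k + r) * (n.choose k : R) * (1 - q) ^ k * q ^ (n - k) =
      ∑ j ∈ range (n + 1), (-1) ^ j * (n.choose j : R) * α ^ (n + r - 2 * j) * q ^ j := by
  have hlhs : ∑ k ∈ range (n + 1), α ^ (k + r) * (n.choose k : R) * (1 - q) ^ k * q ^ (n - k) =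
      α ^ r * ((1 - q) * α + q) ^ n := by
    rw [add_pow, mul_sum]
    refine sum_congr rfl fun k _ => ?_
    rw [pow_add, mul_pow]
    ring
  have hrhs : ∑ j ∈ range (n + 1), (-1) ^ j * (n.choose j : R) * α ^ (n + r - 2 * j) * q ^ j =
      α ^ (r - n) * (α ^ 2 - q) ^ n := by
    rw [sub_eq_neg_add, add_pow, mul_sum]
    refine sum_congr rfl fun j hj => ?_
    have hexp : n + r - 2 * j = r - n + 2 * (n - j) := by
      have := mem_range_succ_iff.mp hj
      omega
    rw [hexp, pow_add, pow_mul, neg_pow]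
    ring
  rw [hlhs, hrhs, pow_mul_one_sub_mul_add_pow_eq_of_sq_eq_add_one hα hrn q]

end Geometric

theorem Real.exists_eq_mul_goldenRatio_pow_add_mul_goldenConj_pow (u : ℕ → ℝ)
    (hu : ∀ m, u (m + 2) = u (m + 1) + u m) : ∃ a b : ℝ, ∀ m, u m = a * φ ^ m + b * ψ ^ m := by
  have hsqrt : √5 ≠ 0 := by positivity
  refine ⟨(u 1 - ψ * u 0) / √5, (φ * u 0 - u 1) / √5, fun m => ?_⟩
  induction m using Nat.twoStepInduction with
  | zero =>
    field_simp
    linear_combination u 0 * goldenRatio_sub_goldenConj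
  | one =>
    field_simp
    linear_combination u 1 * goldenRatio_sub_goldenConj
  | more m ih ih' =>
    rw [hu, ih, ih']
    linear_combination (-((u 1 - ψ * u 0) / √5 * φ ^ m)) * goldenRatio_sq -
      (φ * u 0 - u 1) / √5 * ψ ^ m * goldenConj_sq

theorem sum_mul_choose_one_sub_pow_eq_of_fib_rec (u : ℕ → ℝ)
    (hu : ∀ m, u (m + 2) = u (m + 1) + u m) {n r : ℕ} (hrn : n ≤ r) (q : ℝ) :
    ∑ k ∈ range (n + 1), u (k + r) * (n.choose k : ℝ) * (1 - q) ^ k * q ^ (n - k) =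
      ∑ j ∈ range (n + 1), (-1) ^ j * (n.choose j : ℝ) * u (n + r - 2 * j) * q ^ j := by
  obtain ⟨a, b, hab⟩ := Real.exists_eq_mul_goldenRatio_pow_add_mul_goldenConj_pow u hu
  have hφ := sum_pow_mul_choose_one_sub_pow_eq_of_sq_eq_add_one Real.goldenRatio_sq hrn q
  have hψ := sum_pow_mul_choose_one_sub_pow_eq_of_sq_eq_add_one Real.goldenConj_sq hrn q
  calc ∑ k ∈ range (n + 1), u (k + r) * (n.choose k : ℝ) * (1 - q) ^ k * q ^ (n - k)
      = a * ∑ k ∈ range (n + 1), φ ^ (k + r) * (n.choose k : ℝ) * (1 - q) ^ k * q ^ (n - k) +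
          b * ∑ k ∈ range (n + 1), ψ ^ (k + r) * (n.choose k : ℝ) * (1 - q) ^ k * q ^ (n - k) := by
        simp only [hab, mul_sum, ← sum_add_distrib]
        refine sum_congr rfl fun k _ => ?_
        ring
    _ = ∑ j ∈ range (n + 1), (-1) ^ j * (n.choose j : ℝ) * u (n + r - 2 * j) * q ^ j := by
        simp only [hφ, hψ, hab, mul_sum, ← sum_add_distrib]
        refine sum_congr rfl fun j _ => ?_
        ring

theorem lucas_bernoulli_transform_general (L : ℕ → ℕ)
    (hLrec : ∀ m : ℕ, L (m + 2) = L (m + 1) + L m)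
    (n r : ℕ) (hrn : r ≥ n) (q : ℝ) :
    ∑ k ∈ range (n + 1), (L (k + r) : ℝ) * (n.choose k : ℝ) * (1 - q) ^ k * q ^ (n - k) =
      ∑ j ∈ range (n + 1), (-1 : ℝ) ^ j * (n.choose j : ℝ) * (L (n + r - 2 * j) : ℝ) * q ^ j :=
  sum_mul_choose_one_sub_pow_eq_of_fib_rec (fun m => (L m : ℝ))
    (fun m => by simp only [hLrec, Nat.cast_add]) hrn q

theorem lucas_bernoulli_transform (L : ℕ → ℕ)
    (hL0 : L 0 = 2) (hL1 : L 1 = 1) (hLrec : ∀ m : ℕ, L (m + 2) = L (m + 1) + L m)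
    (n r : ℕ) (hrn : r ≥ n) (q : ℝ) :
    ∑ k ∈ range (n + 1), (L (k + r) : ℝ) * (n.choose k : ℝ) * (1 - q) ^ k * q ^ (n - k) =
      ∑ j ∈ range (n + 1), (-1 : ℝ) ^ j * (n.choose j : ℝ) * (L (n + r - 2 * j) : ℝ) * q ^ j :=
  lucas_bernoulli_transform_general L hLrec n r hrn q
end

section
/- Let α, x, q be real numbers and n, r natural numbers. Then Σ_{k=0}^{n} L^{(α)}_{k+r}(x) C(n,k) (1-q)^k q^{n-k} = Σ_{j=0}^{n} (-1)^j C(n,j) L^{(α-j)}_{n+r}(x) q^j, where L^{(β)}_m denotes the generalized Laguerre polynomial of degree m and parameter β. -/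
/-! The only property of the Laguerre polynomials needed is the lowering relation
`L^{(β-1)}_{m+1} = L^{(β)}_{m+1} - L^{(β)}_m`, which is Pascal's rule for the generalized binomial
coefficient. For any family `F β m` obeying it, Pascal's rule for `C(n+1, k)` shows that both
sides, as functions `S n r`, satisfy `S (n+1) r = q S n r + (1-q) S n (r+1)`; they agree at
`n = 0`, so they agree everywhere. -/

open Finset

/-- Generalized binomial coefficient `t(t-1)⋯(t-s+1)/s!` of a real `t`. -/
noncomputable def rchoose (t : ℝ) (s : ℕ) : ℝ :=
  (∏ i ∈ range s, (t - (i : ℝ))) / (s.factorial : ℝ)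

/-- Generalized Laguerre polynomial `L^{(β)}_m(x)`. -/
noncomputable def genLaguerre (β : ℝ) (m : ℕ) (x : ℝ) : ℝ :=
  ∑ i ∈ range (m + 1), ((-1 : ℝ) ^ i / (i.factorial : ℝ)) * rchoose ((m : ℝ) + β) (m - i) * x ^ i

theorem rchoose_eq_ringChoose (t : ℝ) (s : ℕ) : rchoose t s = Ring.choose t s := by
  rw [Ring.choose_eq_smul, ← Polynomial.aeval_eq_smeval, Polynomial.aeval_def,
    Polynomial.eval₂_eq_eval_map, descPochhammer_map, descPochhammer_eval_eq_prod_range, rchoose,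
    smul_eq_mul, div_eq_inv_mul]

theorem rchoose_zero (t : ℝ) : rchoose t 0 = 1 := by
  simp [rchoose]

theorem rchoose_succ_succ (t : ℝ) (s : ℕ) :
    rchoose (t + 1) (s + 1) = rchoose t s + rchoose t (s + 1) := by
  simp only [rchoose_eq_ringChoose, Ring.choose_succ_succ]

theorem genLaguerre_sub_one_succ (β : ℝ) (m : ℕ) (x : ℝ) :
    genLaguerre (β - 1) (m + 1) x = genLaguerre β (m + 1) x - genLaguerre β m x := by
  have hcoeff : ∀ i ∈ range (m + 1),
      rchoose ((m + 1 : ℕ) + (β - 1)) (m + 1 - i) =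
        rchoose ((m + 1 : ℕ) + β) (m + 1 - i) - rchoose (m + β) (m - i) := by
    intro i hi
    rw [Nat.sub_add_comm (Nat.lt_succ_iff.mp (mem_range.mp hi)), Nat.cast_succ,
      show (m : ℝ) + 1 + β = m + β + 1 by ring, rchoose_succ_succ,
      show (m : ℝ) + 1 + (β - 1) = m + β by ring]
    ring
  unfold genLaguerre
  rw [sum_range_succ _ (m + 1), sum_range_succ _ (m + 1), Nat.sub_self,
    sum_congr rfl fun i hi => by rw [hcoeff i hi]]
  simp only [rchoose_zero, mul_sub, sub_mul, sum_sub_distrib]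
  ring

section LoweringFamily

variable {R : Type*} [CommRing R]

theorem sum_mul_choose_mul_pow_succ (a : ℕ → R) (p q : R) (n : ℕ) :
    ∑ k ∈ range (n + 2), a k * ((n + 1).choose k : R) * p ^ k * q ^ (n + 1 - k) =
      q * ∑ k ∈ range (n + 1), a k * (n.choose k : R) * p ^ k * q ^ (n - k) +
        p * ∑ k ∈ range (n + 1), a (k + 1) * (n.choose k : R) * p ^ k * q ^ (n - k) := by
  rw [mul_sum, mul_sum]
  convert sum_choose_succ_mul (fun i j => a i * p ^ i * q ^ j) n using 1
  · exact sum_congr rfl fun k _ => by ring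
  · congr 1 <;> refine sum_congr rfl fun k hk => ?_
    · rw [Nat.sub_add_comm (Nat.lt_succ_iff.mp (mem_range.mp hk)), pow_succ]
      ring
    · ring

variable (F : ℝ → ℕ → R)

theorem sum_neg_one_pow_mul_choose_succ (hF : ∀ β m, F (β - 1) (m + 1) = F β (m + 1) - F β m)
    (α : ℝ) (q : R) (n m : ℕ) :
    ∑ j ∈ range (n + 2), (-1 : R) ^ j * ((n + 1).choose j : R) * F (α - j) (m + 1) * q ^ j =
      q * ∑ j ∈ range (n + 1), (-1 : R) ^ j * (n.choose j : R) * F (α - j) m * q ^ j +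
        (1 - q) * ∑ j ∈ range (n + 1),
          (-1 : R) ^ j * (n.choose j : R) * F (α - j) (m + 1) * q ^ j := by
  rw [mul_sum, mul_sum, ← sum_add_distrib]
  convert sum_choose_succ_mul (fun i _ => (-1 : R) ^ i * F (α - i) (m + 1) * q ^ i) n using 1
  · exact sum_congr rfl fun k _ => by ring
  · rw [← sum_add_distrib]
    refine sum_congr rfl fun j _ => ?_
    rw [Nat.cast_succ, ← sub_sub, hF]
    ring

theorem sum_bernoulli_eq_sum_neg_one_pow (hF : ∀ β m, F (β - 1) (m + 1) = F β (m + 1) - F β m)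
    (α : ℝ) (q : R) (n r : ℕ) :
    ∑ k ∈ range (n + 1), F α (k + r) * (n.choose k : R) * (1 - q) ^ k * q ^ (n - k) =
      ∑ j ∈ range (n + 1), (-1 : R) ^ j * (n.choose j : R) * F (α - j) (n + r) * q ^ j := by
  induction n generalizing r with
  | zero => simp
  | succ n ih =>
    have ih_succ := ih (r + 1)
    simp only [← add_assoc, ← Nat.add_right_comm _ 1 r] at ih_succ
    rw [sum_mul_choose_mul_pow_succ (fun k => F α (k + r)), ih r, ih_succ,
      Nat.add_right_comm n 1 r, sum_neg_one_pow_mul_choose_succ F hF]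

end LoweringFamily

theorem laguerre_bernoulli_transform (α x q : ℝ) (n r : ℕ) :
    ∑ k ∈ range (n + 1), genLaguerre α (k + r) x * (n.choose k : ℝ) * (1 - q) ^ k * q ^ (n - k) =
      ∑ j ∈ range (n + 1),
        (-1 : ℝ) ^ j * (n.choose j : ℝ) * genLaguerre (α - (j : ℝ)) (n + r) x * q ^ j :=
  sum_bernoulli_eq_sum_neg_one_pow (fun β m => genLaguerre β m x)
    (fun β m => genLaguerre_sub_one_succ β m x) α q n r
end

section
/- Let α and q be real numbers and n, r natural numbers. Then Σ_{k=0}^{n} (-1)^k binom(α, k+r) C(n,k) (1-q)^k q^{n-k} = Σ_{j=0}^{n} (-1)^{n-j} C(n,j) binom(j+α, n+r) q^j, where binom(t, s) denotes the generalized binomial coefficient of a real number t and natural number s. -/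
/-!
Expand `binom(j + α, n + r)` by Chu–Vandermonde as `∑ₘ C(j, m) binom(α, n + r - m)`. After
exchanging the sums, the inner sum `∑ⱼ (-1)^(n-j) C(n, j) C(j, m) q^j` collapses by the binomial
theorem to `C(n, m) q^m (q - 1)^(n - m)`, and the substitution `m = n - k` gives the left side.
-/

open Finset

theorem rchoose_natCast_add (j : ℕ) (α : ℝ) (N : ℕ) :
    rchoose (j + α) N = ∑ m ∈ range (N + 1), (j.choose m : ℝ) * rchoose α (N - m) := by
  rw [rchoose_eq_ringChoose, Ring.add_choose_eq N (Commute.all (j : ℝ) α),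
    Nat.sum_antidiagonal_eq_sum_range_succ_mk]
  simp only [Ring.choose_natCast, rchoose_eq_ringChoose]

theorem sum_neg_one_pow_mul_choose_mul_choose_mul_pow {R : Type*} [CommRing R] (q : R) (n m : ℕ) :
    ∑ j ∈ range (n + 1), (-1 : R) ^ (n - j) * n.choose j * j.choose m * q ^ j =
      n.choose m * q ^ m * (q - 1) ^ (n - m) := by
  obtain hnm | hmn := lt_or_ge n m
  · rw [Nat.choose_eq_zero_of_lt hnm, Nat.cast_zero, zero_mul, zero_mul]
    refine sum_eq_zero fun j hj => ?_
    rw [Nat.choose_eq_zero_of_lt (lt_of_lt_of_le (mem_range.1 hj) hnm)]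
    simp
  obtain ⟨d, rfl⟩ := Nat.exists_eq_add_of_le hmn
  have hchoose (t : ℕ) :
      ((m + d).choose (m + t) * (m + t).choose m : R) = (m + d).choose m * d.choose t := by
    rw [← Nat.cast_mul, ← Nat.cast_mul, Nat.choose_mul (Nat.le_add_right m t),
      Nat.add_sub_cancel_left, Nat.add_sub_cancel_left]
  rw [Nat.add_sub_cancel_left, sub_eq_add_neg, add_pow, mul_sum, add_assoc, sum_range_add,
    sum_eq_zero fun j hj => by rw [Nat.choose_eq_zero_of_lt (mem_range.1 hj)]; simp, zero_add]
  refine sum_congr rfl fun t _ => ?_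
  rw [show m + d - (m + t) = d - t by omega, pow_add]
  linear_combination (-1 : R) ^ (d - t) * q ^ m * q ^ t * hchoose t

theorem sum_neg_one_pow_mul_choose_mul_rchoose_natCast_add_mul_pow (α q : ℝ) (n r : ℕ) :
    ∑ j ∈ range (n + 1), (-1 : ℝ) ^ (n - j) * n.choose j * rchoose (j + α) (n + r) * q ^ j =
      ∑ m ∈ range (n + 1), n.choose m * q ^ m * (q - 1) ^ (n - m) * rchoose α (n + r - m) := by
  have hexpand (j : ℕ) : (-1 : ℝ) ^ (n - j) * n.choose j * rchoose (j + α) (n + r) * q ^ j =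
      ∑ m ∈ range (n + r + 1),
        (-1 : ℝ) ^ (n - j) * n.choose j * j.choose m * q ^ j * rchoose α (n + r - m) := by
    rw [rchoose_natCast_add, mul_sum, sum_mul]
    exact sum_congr rfl fun m _ => by ring
  simp_rw [hexpand]
  rw [sum_comm]
  simp_rw [← sum_mul, sum_neg_one_pow_mul_choose_mul_choose_mul_pow]
  rw [add_right_comm, sum_range_add, add_eq_left]
  exact sum_eq_zero fun t _ => by rw [Nat.choose_eq_zero_of_lt (by omega)]; simp

theorem binomial_bernoulli_transform (α q : ℝ) (n r : ℕ) :
    ∑ k ∈ range (n + 1),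
        (-1 : ℝ) ^ k * rchoose α (k + r) * (n.choose k : ℝ) * (1 - q) ^ k * q ^ (n - k) =
      ∑ j ∈ range (n + 1),
        (-1 : ℝ) ^ (n - j) * (n.choose j : ℝ) * rchoose ((j : ℝ) + α) (n + r) * q ^ j := by
  rw [sum_neg_one_pow_mul_choose_mul_rchoose_natCast_add_mul_pow, ← sum_range_reflect]
  refine sum_congr rfl fun k hk => ?_
  have hkn : k ≤ n := Nat.lt_succ_iff.1 (mem_range.1 hk)
  rw [Nat.add_sub_cancel, Nat.choose_symm hkn, Nat.sub_sub_self hkn,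
    show n - k + r = n + r - k by omega, show q - 1 = -1 * (1 - q) by ring, mul_pow]
  ring
end

section
/- Let α and q be real numbers and n, r natural numbers. Then Σ_{k=0}^{n} (-1)^k binom(α, k+r) C(n,k) (1-q)^{n-k} q^{k} = Σ_{j=0}^{n} (-1)^{j} C(n,j) binom(j+α, j+r) q^j, where binom(t, s) denotes the generalized binomial coefficient of a real number t and natural number s. -/
/-!
Iterating Pascal's rule `j` times gives the Vandermonde-type expansion
`binom(j + α, j + r) = Σ_k C(j,k) binom(α, k + r)`. Substituting it into the right-hand side and
exchanging the two sums, the coefficient of `binom(α, k + r)` is `Σ_j C(n,j) C(j,k) (-q)^j`,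
which equals `C(n,k) (-q)^k (1 - q)^(n-k)` by `C(n,j) C(j,k) = C(n,k) C(n-k,j-k)` and the
binomial theorem.
-/

open Finset

theorem sum_choose_mul_rchoose_add (α : ℝ) (j r : ℕ) :
    ∑ k ∈ range (j + 1), (j.choose k : ℝ) * rchoose α (k + r) =
      rchoose (j + α) (j + r) := by
  induction j generalizing r with
  | zero => simp
  | succ j ih =>
    have h := sum_choose_succ_mul (fun k _ => rchoose α (k + r)) j
    simp only [add_right_comm _ 1 r, add_assoc] at h
    rw [h, ih, ih (r + 1), show ((j + 1 : ℕ) : ℝ) + α = j + α + 1 by push_cast; ring,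
      add_right_comm j 1 r, rchoose_succ_succ]
    rfl

theorem sum_choose_mul_choose_mul_pow {R : Type*} [CommSemiring R] (x : R) (n k : ℕ) :
    ∑ j ∈ range (n + 1), (n.choose j * j.choose k : R) * x ^ j =
      n.choose k * x ^ k * (1 + x) ^ (n - k) := by
  obtain hnk | hkn := lt_or_ge n k
  · rw [Nat.choose_eq_zero_of_lt hnk, Nat.cast_zero, zero_mul, zero_mul]
    exact sum_eq_zero fun j hj => by
      simp [Nat.choose_eq_zero_of_lt ((Nat.lt_succ_iff.1 (mem_range.1 hj)).trans_lt hnk)]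
  obtain ⟨m, rfl⟩ := Nat.exists_eq_add_of_le hkn
  have h_low : ∑ j ∈ range k, ((k + m).choose j * j.choose k : R) * x ^ j = 0 :=
    sum_eq_zero fun j hj => by simp [Nat.choose_eq_zero_of_lt (mem_range.1 hj)]
  rw [add_assoc, sum_range_add, h_low, zero_add, Nat.add_sub_cancel_left, add_comm 1 x,
    add_pow, mul_sum]
  refine sum_congr rfl fun i _ => ?_
  rw [← Nat.cast_mul, Nat.choose_mul (Nat.le_add_right k i)]
  simp only [Nat.add_sub_cancel_left, Nat.cast_mul, one_pow, pow_add]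
  ring

theorem sum_choose_mul_pow_mul_sum_choose {R : Type*} [CommSemiring R] (a : ℕ → R) (x : R)
    (n : ℕ) :
    ∑ j ∈ range (n + 1), (n.choose j : R) * x ^ j * ∑ k ∈ range (j + 1), (j.choose k : R) * a k =
      ∑ k ∈ range (n + 1), (n.choose k : R) * a k * x ^ k * (1 + x) ^ (n - k) := by
  have h_extend : ∀ j ∈ range (n + 1), ∑ k ∈ range (j + 1), (j.choose k : R) * a k =
      ∑ k ∈ range (n + 1), (j.choose k : R) * a k := fun j hj =>
    sum_subset (range_subset_range.2 (by simpa using hj)) fun k _ hk => by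
      simp [Nat.choose_eq_zero_of_lt (by simpa using hk : j < k)]
  rw [sum_congr rfl fun j hj => by rw [h_extend j hj, mul_sum], sum_comm]
  refine sum_congr rfl fun k _ => ?_
  trans (∑ j ∈ range (n + 1), (n.choose j * j.choose k : R) * x ^ j) * a k
  · rw [sum_mul]
    exact sum_congr rfl fun j _ => by ring
  · rw [sum_choose_mul_choose_mul_pow]
    ring

theorem binomial_reversed_bernoulli_transform (α q : ℝ) (n r : ℕ) :
    ∑ k ∈ range (n + 1),
        (-1 : ℝ) ^ k * rchoose α (k + r) * (n.choose k : ℝ) * (1 - q) ^ (n - k) * q ^ k =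
      ∑ j ∈ range (n + 1),
        (-1 : ℝ) ^ j * (n.choose j : ℝ) * rchoose ((j : ℝ) + α) (j + r) * q ^ j := by
  have h := sum_choose_mul_pow_mul_sum_choose (fun k => rchoose α (k + r)) (-q) n
  simp only [sum_choose_mul_rchoose_add, ← sub_eq_add_neg] at h
  convert h.symm using 2 with k <;> rw [neg_pow] <;> ring
end

section
/- Let α be a real number and n, k, r natural numbers. Then Σ_{j=0}^{n} (-1)^{n-j} C(n,j) binom(j+k+α, n+k+r) = binom(k+α, k+r), where binom(t, s) denotes the generalized binomial coefficient of a real number t and natural number s. -/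
/-!
By Pascal's rule the forward difference lowers the lower index of a binomial coefficient:
`Δ binom(x, m + 1) = binom(x, m)`, so `Δⁿ binom(x, n + s) = binom(x, s)`. The left-hand side is
the expansion of `Δⁿ binom(·, n + k + r)` at `x = k + α` as an alternating sum of shifts.
-/

open Finset

theorem Ring.fwdDiff_iter_choose {R : Type*} [Ring R] [BinomialRing R] (n s : ℕ) :
    (fwdDiff 1)^[n] (fun x : R ↦ Ring.choose x (n + s)) = fun x ↦ Ring.choose x s := by
  induction n with
  | zero => simp
  | succ n ih =>
    rw [Function.iterate_succ_apply, ← ih]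
    congr 1
    ext x
    rw [fwdDiff, Nat.add_right_comm, Ring.choose_succ_succ, add_sub_cancel_right]

theorem binomial_alternating_sum (α : ℝ) (n k r : ℕ) :
    ∑ j ∈ range (n + 1),
        (-1 : ℝ) ^ (n - j) * (n.choose j : ℝ) * rchoose ((j : ℝ) + (k : ℝ) + α) (n + k + r) =
      rchoose ((k : ℝ) + α) (k + r) := by
  have hΔ := congrFun (Ring.fwdDiff_iter_choose (R := ℝ) n (k + r)) (k + α)
  rw [fwdDiff_iter_eq_sum_shift] at hΔ
  push_cast [nsmul_one, zsmul_eq_mul] at hΔ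
  rw [rchoose_eq_ringChoose, ← hΔ]
  refine sum_congr rfl fun j _ ↦ ?_
  rw [rchoose_eq_ringChoose, add_comm (k + α) (j : ℝ), ← add_assoc, Nat.add_assoc]
end

section
/- Let (w_n(x))_{n≥0} be the geometric polynomials, determined by w_0(x) = 1 and w_n(x) = x · Σ_{k=0}^{n-1} C(n,k) w_k(x) for n ≥ 1. For all real numbers x, q and every natural number n, x · Σ_{k=0}^{n} (-1)^k w_k(x) C(n,k) (1-q)^{n-k} q^{k} = (x+1) · Σ_{j=0}^{n} C(n,j) w_j(x) (-q)^j - 1. -/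
/-!
Writing `(-1)^k q^k = (-q)^k` and `1 - q = -q + 1`, expanding `(-q + 1)^(n-k)` binomially and using
`C(n,k) C(n-k,j-k) = C(n,j) C(j,k)` turns the left side into
`Σ_j C(n,j) (-q)^j · x Σ_{k ≤ j} C(j,k) w_k(x)`. By the recurrence (and `w_0 = 1` for `j = 0`)
the inner term is `(x+1) w_j(x) - [j = 0]`, and the `[j = 0]` terms sum to `1`.
-/

open Finset

theorem sum_choose_mul_pow_mul_add_one_pow {R : Type*} [CommSemiring R] (a : ℕ → R) (t : R)
    (n : ℕ) :
    ∑ k ∈ range (n + 1), (n.choose k : R) * a k * t ^ k * (t + 1) ^ (n - k) =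
      ∑ j ∈ range (n + 1),
        (n.choose j : R) * t ^ j * ∑ k ∈ range (j + 1), (j.choose k : R) * a k := by
  have inner (k : ℕ) (hk : k ≤ n) :
      (n.choose k : R) * a k * t ^ k * (t + 1) ^ (n - k) =
        ∑ j ∈ Ico k (n + 1), (n.choose j : R) * t ^ j * ((j.choose k : R) * a k) := by
    rw [sum_Ico_eq_sum_range, Nat.sub_add_comm hk, add_pow, mul_sum]
    refine sum_congr rfl fun i _ => ?_
    have h : (n.choose (k + i) : R) * (k + i).choose k = n.choose k * (n - k).choose i := by
      have := Nat.choose_mul (n := n) (Nat.le_add_right k i)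
      rw [Nat.add_sub_cancel_left] at this
      simpa only [Nat.cast_mul] using congrArg (Nat.cast : ℕ → R) this
    calc _ = (n.choose k : R) * (n - k).choose i * a k * t ^ (k + i) := by ring
      _ = _ := by rw [← h]; ring
  calc _ = ∑ k ∈ range (n + 1), ∑ j ∈ Ico k (n + 1),
        (n.choose j : R) * t ^ j * ((j.choose k : R) * a k) :=
        sum_congr rfl fun k hk => inner k (Nat.lt_succ_iff.mp (mem_range.mp hk))
    _ = _ := by
      rw [sum_comm' (t' := range (n + 1)) (s' := fun j => range (j + 1))]
      · simp_rw [mul_sum]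
      · intro k j
        simp only [mem_range, mem_Ico]
        omega

theorem mul_sum_choose_mul_of_geometric_rec {R : Type*} [CommRing R] {a : ℕ → R} {x : R}
    (h0 : a 0 = 1) (hrec : ∀ n, 1 ≤ n → a n = x * ∑ k ∈ range n, (n.choose k : R) * a k)
    (j : ℕ) :
    x * ∑ k ∈ range (j + 1), (j.choose k : R) * a k =
      (x + 1) * a j - if j = 0 then 1 else 0 := by
  rcases j with _ | j
  · simp [h0]
  · rw [sum_range_succ, mul_add, ← hrec (j + 1) j.succ_pos]
    simp only [Nat.choose_self, Nat.cast_one, one_mul, Nat.add_one_ne_zero, if_false]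
    ring

theorem geometric_poly_bernoulli_transform (w : ℕ → ℝ → ℝ)
    (hw0 : ∀ x : ℝ, w 0 x = 1)
    (hwrec : ∀ (n : ℕ), 1 ≤ n → ∀ (x : ℝ),
      w n x = x * ∑ k ∈ range n, (n.choose k : ℝ) * w k x)
    (x q : ℝ) (n : ℕ) :
    x * ∑ k ∈ range (n + 1), (-1 : ℝ) ^ k * w k x * (n.choose k : ℝ) * (1 - q) ^ (n - k) * q ^ k =
      (x + 1) * (∑ j ∈ range (n + 1), (n.choose j : ℝ) * w j x * (-q) ^ j) - 1 := by
  have key := mul_sum_choose_mul_of_geometric_rec (hw0 x) (fun n hn => hwrec n hn x)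
  calc _ = x * ∑ k ∈ range (n + 1),
          (n.choose k : ℝ) * w k x * (-q) ^ k * (-q + 1) ^ (n - k) := by
        congr 1
        exact sum_congr rfl fun k _ => by ring
    _ = ∑ j ∈ range (n + 1),
          (n.choose j : ℝ) * (-q) ^ j * ((x + 1) * w j x - if j = 0 then 1 else 0) := by
        rw [sum_choose_mul_pow_mul_add_one_pow, mul_sum]
        exact sum_congr rfl fun j _ => by rw [← key]; ring
    _ = (x + 1) * (∑ j ∈ range (n + 1), (n.choose j : ℝ) * w j x * (-q) ^ j) -
          ∑ j ∈ range (n + 1), (n.choose j : ℝ) * (-q) ^ j * if j = 0 then 1 else 0 := by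
        rw [mul_sum, ← sum_sub_distrib]
        exact sum_congr rfl fun j _ => by ring
    _ = _ := by simp [sum_range_succ']
end

section
/- Let (a_n)_{n≥0} be a sequence of real numbers, let A be the formal power series over ℝ whose n-th coefficient is a_n, and let q be a real number. Then the formal power series (1 - q·z)^{-1} · A((1-q)·z·(1-q·z)^{-1}) — where the inverse (1-q·z)^{-1} exists since 1-q·z has constant coefficient 1, and A is substituted with the power series (1-q)·z·(1-q·z)^{-1}, which has zero constant coefficient — has n-th coefficient equal to the Bernoulli transform S_n(q) = Σ_{k=0}^{n} a_k C(n,k) (1-q)^k q^{n-k} for every natural number n. -/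
open Finset PowerSeries

/-- Composition `A ∘ B` of formal power series (the usual substitution, valid when `B` has
zero constant coefficient: the `n`-th coefficient of `∑ k, (coeff k A) • B ^ k` is then the
finite sum `∑_{k ≤ n} (coeff k A) * coeff n (B ^ k)`). -/
noncomputable def psComp (A B : PowerSeries ℝ) : PowerSeries ℝ :=
  PowerSeries.mk fun n =>
    ∑ k ∈ range (n + 1), PowerSeries.coeff (R := ℝ) k A * PowerSeries.coeff (R := ℝ) n (B ^ k)

/-!
Put `u = (1 - qX)⁻¹` and `B = (1 - q) X u`. Rescaling `X ↦ qX` in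
`(1 - X)^{-(k+1)} = ∑ₘ C(k + m, k) Xᵐ` gives `u^{k+1} = ∑ₘ C(k + m, k) qᵐ Xᵐ`, hence
`u Bᵏ = (1 - q)ᵏ Xᵏ u^{k+1}` has `n`-th coefficient `C(n, k) (1 - q)ᵏ q^{n-k}`.
Since `Xᵏ ∣ Bᵏ`, the `n`-th coefficient of `u · A(B)` is `∑_{k ≤ n} aₖ` times these.
-/

namespace PowerSeries

variable {k : Type*} [Field k]

theorem inv_one_sub_C_mul_X_pow_succ (q : k) (d : ℕ) :
    (1 - C q * X)⁻¹ ^ (d + 1) = mk fun n => q ^ n * ((d + n).choose d : k) := by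
  have h := congrArg (rescale q) (mk_add_choose_mul_one_sub_pow_eq_one k (d := d))
  rw [map_mul, map_pow, map_sub, map_one, rescale_X, rescale_mk] at h
  have hinv : (1 - C q * X)⁻¹ * (1 - C q * X) = 1 := PowerSeries.inv_mul_cancel _ (by simp)
  calc (1 - C q * X)⁻¹ ^ (d + 1)
      = (1 - C q * X)⁻¹ ^ (d + 1) *
          ((mk fun n => q ^ n * ((d + n).choose d : k)) * (1 - C q * X) ^ (d + 1)) := by
        rw [h, mul_one]
    _ = ((1 - C q * X)⁻¹ * (1 - C q * X)) ^ (d + 1) *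
          mk fun n => q ^ n * ((d + n).choose d : k) := by
        rw [mul_pow, mul_assoc, mul_comm (mk _)]
    _ = mk fun n => q ^ n * ((d + n).choose d : k) := by rw [hinv, one_pow, one_mul]

theorem coeff_inv_one_sub_C_mul_X_mul_pow (p q : k) (n j : ℕ) :
    coeff n ((1 - C q * X)⁻¹ * (C p * X * (1 - C q * X)⁻¹) ^ j) =
      n.choose j * p ^ j * q ^ (n - j) := by
  have h : (1 - C q * X)⁻¹ * (C p * X * (1 - C q * X)⁻¹) ^ j =
      C (p ^ j) * (X ^ j * (1 - C q * X)⁻¹ ^ (j + 1)) := by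
    rw [map_pow]; ring
  rw [h, coeff_C_mul, coeff_X_pow_mul', inv_one_sub_C_mul_X_pow_succ]
  split_ifs with hjn
  · rw [coeff_mk, Nat.add_sub_cancel' hjn]; ring
  · rw [Nat.choose_eq_zero_of_lt (not_le.mp hjn)]; ring

end PowerSeries

theorem coeff_psComp_eq_sum_range_of_le {A B : PowerSeries ℝ} (hB : X ∣ B) {j n : ℕ}
    (hjn : j ≤ n) :
    coeff j (psComp A B) = ∑ k ∈ range (n + 1), coeff k A * coeff j (B ^ k) := by
  rw [psComp, coeff_mk]
  refine sum_subset (range_subset_range.mpr (by omega)) fun k _ hk => ?_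
  have hB_pow : X ^ k ∣ B ^ k := pow_dvd_pow_of_dvd hB k
  rw [X_pow_dvd_iff.mp hB_pow j (by simpa using hk), mul_zero]

theorem coeff_mul_psComp (U A : PowerSeries ℝ) {B : PowerSeries ℝ} (hB : X ∣ B) (n : ℕ) :
    coeff n (U * psComp A B) = ∑ k ∈ range (n + 1), coeff k A * coeff n (U * B ^ k) := by
  simp_rw [coeff_mul, mul_sum]
  rw [sum_comm]
  refine sum_congr rfl fun p hp => ?_
  rw [coeff_psComp_eq_sum_range_of_le hB (HasAntidiagonal.antidiagonal.snd_le hp), mul_sum]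
  exact sum_congr rfl fun k _ => mul_left_comm _ _ _

theorem bernoulli_transform_gen_function (a : ℕ → ℝ) (q : ℝ) (n : ℕ) :
    PowerSeries.coeff (R := ℝ) n
        ((1 - PowerSeries.C (R := ℝ) q * PowerSeries.X)⁻¹ *
          psComp (PowerSeries.mk a)
            (PowerSeries.C (R := ℝ) (1 - q) * PowerSeries.X *
              (1 - PowerSeries.C (R := ℝ) q * PowerSeries.X)⁻¹)) =
      ∑ k ∈ range (n + 1), a k * (n.choose k : ℝ) * (1 - q) ^ k * q ^ (n - k) := by
  rw [coeff_mul_psComp _ _ (dvd_mul_of_dvd_left (dvd_mul_left X _) _) n]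
  refine sum_congr rfl fun k _ => ?_
  rw [coeff_mk, coeff_inv_one_sub_C_mul_X_mul_pow]
  ring
end

section
/- Let (a_n)_{n≥0} be a sequence of real numbers and for a real number t set S_n(t) := Σ_{k=0}^{n} a_k C(n,k) (1-t)^k t^{n-k}. Then for all real numbers x, q and every natural number n, S_n(x + q - x·q) = Σ_{k=0}^{n} S_k(x) C(n,k) (1-q)^k q^{n-k}; that is, the Bernoulli transform (with parameter q) of the sequence (S_n(x)) is the sequence (S_n(x+q-xq)). -/
/-!
Since `1 - (x + q - x q) = (1 - x)(1 - q)`, the claim is the binomial thinning identity: choosing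
`k` of `n` items with weight `(1 - q)` and then `j` of those `k` with weight `(1 - x)` is the same
as choosing `j` of the `n` items directly with weight `(1 - x)(1 - q)`. Algebraically this is
`C(n,k) C(k,j) = C(n,j) C(n-j,k-j)` followed by the binomial theorem.
-/

open Finset

theorem sum_choose_mul_pow_mul_choose_mul_pow {R : Type*} [CommSemiring R]
    (n j : ℕ) (u v w y : R) :
    ∑ k ∈ range (n + 1), (k.choose j : R) * v ^ j * y ^ (k - j) *
        ((n.choose k : R) * u ^ k * w ^ (n - k)) =
      (n.choose j : R) * (u * v) ^ j * (u * y + w) ^ (n - j) := by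
  rcases lt_or_ge n j with hnj | hjn
  · rw [Nat.choose_eq_zero_of_lt hnj, Nat.cast_zero, zero_mul, zero_mul]
    refine sum_eq_zero fun k hk => ?_
    rw [Nat.choose_eq_zero_of_lt (by grind), Nat.cast_zero, zero_mul, zero_mul, zero_mul]
  obtain ⟨l, rfl⟩ := Nat.exists_eq_add_of_le hjn
  have hlow : ∑ k ∈ range j, (k.choose j : R) * v ^ j * y ^ (k - j) *
      (((j + l).choose k : R) * u ^ k * w ^ (j + l - k)) = 0 :=
    sum_eq_zero fun k hk => by
      rw [Nat.choose_eq_zero_of_lt (mem_range.1 hk), Nat.cast_zero, zero_mul, zero_mul, zero_mul]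
  rw [show j + l + 1 = j + (l + 1) by omega, sum_range_add, hlow, zero_add,
    Nat.add_sub_cancel_left, add_pow, mul_sum]
  refine sum_congr rfl fun m _ => ?_
  have hchoose : ((j + l).choose (j + m) : R) * (j + m).choose j =
      ((j + l).choose j : R) * l.choose m := by
    have h := Nat.choose_mul (n := j + l) (Nat.le_add_right j m)
    rw [Nat.add_sub_cancel_left, Nat.add_sub_cancel_left] at h
    exact_mod_cast congrArg (Nat.cast (R := R)) h
  rw [Nat.add_sub_cancel_left, show j + l - (j + m) = l - m by omega]
  calc _ = ((j + l).choose (j + m) : R) * (j + m).choose j *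
        (u ^ j * v ^ j * (u ^ m * y ^ m) * w ^ (l - m)) := by ring
    _ = _ := by rw [hchoose]; ring

theorem bernoulli_transform_semigroup (a : ℕ → ℝ) (S : ℕ → ℝ → ℝ)
    (hS : ∀ (m : ℕ) (t : ℝ),
      S m t = ∑ k ∈ range (m + 1), a k * (m.choose k : ℝ) * (1 - t) ^ k * t ^ (m - k))
    (x q : ℝ) (n : ℕ) :
    S n (x + q - x * q) =
      ∑ k ∈ range (n + 1), S k x * (n.choose k : ℝ) * (1 - q) ^ k * q ^ (n - k) := by
  have hSx : ∀ k ∈ range (n + 1),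
      S k x = ∑ j ∈ range (n + 1), a j * (k.choose j : ℝ) * (1 - x) ^ j * x ^ (k - j) := by
    intro k hk
    rw [hS]
    refine sum_subset (range_subset_range.2 (by grind)) fun j _ hj => ?_
    rw [Nat.choose_eq_zero_of_lt (by grind), Nat.cast_zero, mul_zero, zero_mul, zero_mul]
  calc S n (x + q - x * q)
      = ∑ j ∈ range (n + 1), a j *
          ((n.choose j : ℝ) * ((1 - q) * (1 - x)) ^ j * ((1 - q) * x + q) ^ (n - j)) := by
        rw [hS, show x + q - x * q = (1 - q) * x + q by ring]
        exact sum_congr rfl fun j _ => by ring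
    _ = ∑ j ∈ range (n + 1), ∑ k ∈ range (n + 1), a j * (k.choose j : ℝ) * (1 - x) ^ j *
          x ^ (k - j) * ((n.choose k : ℝ) * (1 - q) ^ k * q ^ (n - k)) := by
        simp_rw [← sum_choose_mul_pow_mul_choose_mul_pow, mul_sum, mul_assoc]
    _ = ∑ k ∈ range (n + 1), S k x * (n.choose k : ℝ) * (1 - q) ^ k * q ^ (n - k) := by
        rw [sum_comm]
        refine sum_congr rfl fun k hk => ?_
        rw [hSx k hk, sum_mul, sum_mul, sum_mul]
        exact sum_congr rfl fun j _ => by ring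
end

section
/- Let (a_n)_{n≥0} be a sequence of real numbers and for a real number t set S_n(t) := Σ_{k=0}^{n} a_k C(n,k) (1-t)^k t^{n-k}. Then for all real numbers x, q and all natural numbers m, n, (1-q)^m · Σ_{k=0}^{n} S_{k+m}(x) C(n,k) (1-q)^k q^{n-k} = Σ_{j=0}^{m} C(m,j) (-q)^{m-j} S_{j+n}(x + q - x·q). -/
/-!
Write `B_t` for the Bernoulli transform with parameter `t` and `E` for the shift of sequences.
Pascal's rule gives the intertwining relation `(E - t) B_t = (1 - t) B_t E`, hence
`(E - q)^m B_q = (1 - q)^m B_q E^m`. Apply this to the sequence `S(x) = B_x a`: by the composition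
law `B_q B_x = B_{x + q - xq}` (note `1 - (x + q - xq) = (1 - x)(1 - q)`) the right side becomes
`(E - q)^m S(x + q - xq)`, and expanding `(E - q)^m` binomially gives the theorem.
-/

open Finset

variable {R : Type*} [CommRing R]

def bernoulliTransform (t : R) (a : ℕ → R) (n : ℕ) : R :=
  ∑ k ∈ range (n + 1), a k * n.choose k * (1 - t) ^ k * t ^ (n - k)

def seqShift : Module.End R (ℕ → R) := LinearMap.funLeft R R Nat.succ

lemma seqShift_apply (c : ℕ → R) (n : ℕ) : seqShift c n = c (n + 1) := rfl

lemma seqShift_pow_apply (j : ℕ) (c : ℕ → R) (n : ℕ) : (seqShift ^ j) c n = c (n + j) := by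
  induction j generalizing c with
  | zero => rfl
  | succ j ih => rw [pow_succ, Module.End.mul_apply, ih]; rfl

lemma bernoulliTransform_succ (t : R) (a : ℕ → R) (n : ℕ) :
    bernoulliTransform t a (n + 1) =
      bernoulliTransform t a n * t + bernoulliTransform t (seqShift a) n * (1 - t) := by
  let f i j := a i * (1 - t) ^ i * t ^ j
  calc bernoulliTransform t a (n + 1)
      = ∑ i ∈ range (n + 2), ((n + 1).choose i : R) * f i (n + 1 - i) :=
        sum_congr rfl fun _ _ ↦ by ring
    _ = ∑ i ∈ range (n + 1), (n.choose i : R) * f i (n + 1 - i) +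
        ∑ i ∈ range (n + 1), (n.choose i : R) * f (i + 1) (n - i) := sum_choose_succ_mul f n
    _ = _ := by
      simp only [bernoulliTransform, sum_mul]
      congr 1 <;> refine sum_congr rfl fun i hi ↦ ?_
      · rw [Nat.sub_add_comm (mem_range_succ_iff.1 hi)]
        ring
      · rw [seqShift_apply]
        ring

lemma sum_Ico_choose_mul_choose_mul_pow {i n : ℕ} (hi : i ≤ n) (u v : R) :
    ∑ k ∈ Ico i (n + 1), (n.choose k * k.choose i : R) * u ^ (k - i) * v ^ (n - k) =
      n.choose i * (u + v) ^ (n - i) := by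
  rw [sum_Ico_eq_sum_range, add_pow, mul_sum, Nat.sub_add_comm hi]
  refine sum_congr rfl fun j _ ↦ ?_
  rw [← Nat.cast_mul, Nat.choose_mul (Nat.le_add_right i j), Nat.add_sub_cancel_left,
    Nat.sub_add_eq]
  push_cast
  ring

theorem bernoulliTransform_bernoulliTransform (x q : R) (a : ℕ → R) :
    bernoulliTransform q (bernoulliTransform x a) = bernoulliTransform (x + q - x * q) a := by
  funext n
  simp only [bernoulliTransform, sum_mul, range_eq_Ico]
  rw [← sum_Ico_Ico_comm]
  refine sum_congr rfl fun i hi ↦ ?_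
  calc _ = a i * ((1 - x) * (1 - q)) ^ i * ∑ k ∈ Ico i (n + 1),
          (n.choose k * k.choose i : R) * (x * (1 - q)) ^ (k - i) * q ^ (n - k) := by
        rw [mul_sum]
        refine sum_congr rfl fun k hk ↦ ?_
        rw [← pow_mul_pow_sub (1 - q) (mem_Ico.1 hk).1, mul_pow, mul_pow]
        ring
    _ = _ := by
      rw [sum_Ico_choose_mul_choose_mul_pow (Nat.lt_succ_iff.1 (mem_Ico.1 hi).2)]
      ring

lemma seqShift_sub_pow_apply (q : R) (m : ℕ) (c : ℕ → R) (n : ℕ) :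
    ((seqShift - algebraMap R _ q) ^ m : Module.End R (ℕ → R)) c n =
      ∑ j ∈ range (m + 1), (m.choose j : R) * (-q) ^ (m - j) * c (j + n) := by
  rw [sub_eq_add_neg, ← map_neg, (Algebra.commute_algebraMap_right _ _).add_pow]
  simp only [← map_pow, LinearMap.sum_apply, Module.End.mul_apply, Module.End.natCast_apply,
    Module.algebraMap_end_apply, Finset.sum_apply, seqShift_pow_apply, Pi.smul_apply,
    smul_eq_mul]
  exact sum_congr rfl fun j _ ↦ by rw [add_comm n j]; ring

lemma seqShift_sub_bernoulliTransform (t : R) (a : ℕ → R) :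
    (seqShift - algebraMap R _ t : Module.End R (ℕ → R)) (bernoulliTransform t a) =
      (1 - t) • bernoulliTransform t (seqShift a) := by
  funext n
  simp only [LinearMap.sub_apply, Module.algebraMap_end_apply, Pi.sub_apply, Pi.smul_apply,
    seqShift_apply, bernoulliTransform_succ, smul_eq_mul]
  ring

lemma seqShift_sub_pow_bernoulliTransform (t : R) (m : ℕ) (a : ℕ → R) :
    ((seqShift - algebraMap R _ t) ^ m : Module.End R (ℕ → R)) (bernoulliTransform t a) =
      (1 - t) ^ m • bernoulliTransform t ((seqShift ^ m) a) := by
  induction m generalizing a with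
  | zero => simp
  | succ m ih =>
    rw [pow_succ, Module.End.mul_apply, seqShift_sub_bernoulliTransform, map_smul, ih, smul_smul,
      ← pow_succ', ← Module.End.mul_apply, ← pow_succ]

theorem bernoulli_transform_shifted (a : ℕ → ℝ) (S : ℕ → ℝ → ℝ)
    (hS : ∀ (m : ℕ) (t : ℝ),
      S m t = ∑ k ∈ range (m + 1), a k * (m.choose k : ℝ) * (1 - t) ^ k * t ^ (m - k))
    (x q : ℝ) (m n : ℕ) :
    (1 - q) ^ m *
        ∑ k ∈ range (n + 1), S (k + m) x * (n.choose k : ℝ) * (1 - q) ^ k * q ^ (n - k) =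
      ∑ j ∈ range (m + 1), (m.choose j : ℝ) * (-q) ^ (m - j) * S (j + n) (x + q - x * q) := by
  have hS' (t : ℝ) : (S · t) = bernoulliTransform t a := funext (hS · t)
  calc _ = ((1 - q) ^ m • bernoulliTransform q ((seqShift ^ m) (S · x))) n := by
        simp only [Pi.smul_apply, smul_eq_mul, bernoulliTransform, seqShift_pow_apply]
    _ = (((seqShift - algebraMap ℝ _ q) ^ m : Module.End ℝ (ℕ → ℝ)) (S · (x + q - x * q))) n := by
        rw [← seqShift_sub_pow_bernoulliTransform, hS', hS', bernoulliTransform_bernoulliTransform]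
    _ = _ := seqShift_sub_pow_apply q m _ n
end

section
/- For all real numbers x, y and all natural numbers n, k with k ≤ n, Σ_{j=k}^{n} C(j,k) (1-y)^k y^{j-k} · C(n,j) (1-x)^j x^{n-j} = C(n,k) · ((1-x)(1-y))^k · (1 - (1-x)(1-y))^{n-k}. (Probabilistically: if Z(n) is binomial with parameters (n, 1-x) and, independently, T(m) is binomial with parameters (m, 1-y), then the compound variable T(Z(n)) is binomial with parameters (n, (1-x)(1-y)).) -/
open Finset

/-- With `j = k + i`, the identity `C(n, k + i) C(k + i, k) = C(n, k) C(n - k, i)` turns the sum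
into `C(n, k) (a p)^k` times the binomial expansion of `(a q + b)^(n - k)`. -/
theorem sum_Icc_choose_mul_choose_mul_pow {R : Type*} [CommSemiring R] (a b p q : R) (n k : ℕ) :
    ∑ j ∈ Icc k n,
        (j.choose k : R) * p ^ k * q ^ (j - k) * (n.choose j : R) * a ^ j * b ^ (n - j) =
      (n.choose k : R) * (a * p) ^ k * (a * q + b) ^ (n - k) := by
  obtain hnk | hkn := lt_or_ge n k
  · simp [Icc_eq_empty_of_lt hnk, Nat.choose_eq_zero_of_lt hnk]
  rw [add_pow, mul_sum, ← Ico_add_one_right_eq_Icc, sum_Ico_eq_sum_range,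
    show n + 1 - k = n - k + 1 by omega]
  refine sum_congr rfl fun i _ => ?_
  have hchoose : (n.choose (k + i) : R) * (k + i).choose k = n.choose k * (n - k).choose i := by
    rw [← Nat.cast_mul, ← Nat.cast_mul, Nat.choose_mul (Nat.le_add_right k i),
      Nat.add_sub_cancel_left]
  rw [Nat.add_sub_cancel_left, Nat.sub_add_eq]
  calc _ = (n.choose (k + i) : R) * (k + i).choose k *
          ((a * p) ^ k * ((a * q) ^ i * b ^ (n - k - i))) := by ring
    _ = _ := by rw [hchoose]; ring

theorem compound_binomial_general (x y : ℝ) (n k : ℕ) :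
    ∑ j ∈ Icc k n,
        (j.choose k : ℝ) * (1 - y) ^ k * y ^ (j - k) * (n.choose j : ℝ) * (1 - x) ^ j * x ^ (n - j) =
      (n.choose k : ℝ) * ((1 - x) * (1 - y)) ^ k * (1 - (1 - x) * (1 - y)) ^ (n - k) := by
  rw [sum_Icc_choose_mul_choose_mul_pow, show 1 - (1 - x) * (1 - y) = (1 - x) * y + x by ring]

theorem compound_binomial (x y : ℝ) (n k : ℕ) (hk : k ≤ n) :
    ∑ j ∈ Icc k n,
        (j.choose k : ℝ) * (1 - y) ^ k * y ^ (j - k) * (n.choose j : ℝ) * (1 - x) ^ j * x ^ (n - j) =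
      (n.choose k : ℝ) * ((1 - x) * (1 - y)) ^ k * (1 - (1 - x) * (1 - y)) ^ (n - k) :=
  compound_binomial_general x y n k
end

section
/- Let (a_n)_{n≥0} be a sequence of real numbers and set M(n,j) := Σ_{l=0}^{j} (-1)^l C(j,l) a_{n-l} for 0 ≤ j ≤ n. Let (f_n)_{n≥0} be a sequence of functions f_n : ℝ → ℝ satisfying the Appell binomial identity f_n(u+v) = Σ_{k=0}^{n} C(n,k) f_k(u) v^{n-k} for all real u, v and all n ≥ 0. Then for all real numbers x, y and every natural number n, Σ_{k=0}^{n} a_k C(n,k) f_k(y) x^{n-k} = Σ_{j=0}^{n} (-1)^j C(n,j) M(n,j) f_{n-j}(x+y) x^j. -/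
/-!
Expanding `f (n - j) (x + y) = f (n - j) (y + x)` by the Appell identity turns the right-hand
side into a double sum over `j + k ≤ n` whose coefficient `C(n,j) C(n-j,k)` is symmetric in `j`
and `k`. After exchanging the sums, the coefficient of `C(n,k) f_k(y) x^(n-k)` is the binomial
transform of `j ↦ M(n,j)` at `n - k`. Since `M(n,·)` is itself the binomial transform of
`l ↦ a (n - l)`, and the binomial transform is an involution (it is `(-1)^j Δ^j b 0`, and the
Gregory–Newton formula inverts forward differences), this coefficient is `a k`.
-/

open Finset

section BinomialTransform

variable {R : Type*} [CommRing R]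

def binomialTransform (b : ℕ → R) (j : ℕ) : R :=
  ∑ l ∈ range (j + 1), (-1 : R) ^ l * (j.choose l : R) * b l

theorem binomialTransform_eq_neg_one_pow_mul_fwdDiff_iter (b : ℕ → R) (j : ℕ) :
    binomialTransform b j = (-1 : R) ^ j * (fwdDiff 1)^[j] b 0 := by
  rw [binomialTransform, fwdDiff_iter_eq_sum_shift, mul_sum]
  refine sum_congr rfl fun l hl => ?_
  obtain ⟨i, rfl⟩ := Nat.exists_eq_add_of_le' (Nat.lt_succ_iff.mp (mem_range.mp hl))
  rw [zsmul_eq_mul, Nat.add_sub_cancel, pow_add, zero_add, smul_eq_mul, mul_one]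
  push_cast
  have hsq : (-1 : R) ^ i * (-1) ^ i = 1 := by rw [← mul_pow, mul_neg_one, neg_neg, one_pow]
  linear_combination (-(-1 : R) ^ l * ((i + l).choose l : R) * b l) * hsq

theorem binomialTransform_binomialTransform (b : ℕ → R) :
    binomialTransform (binomialTransform b) = b := by
  ext m
  have hnewton := shift_eq_sum_fwdDiff_iter 1 b m 0
  rw [zero_add, smul_eq_mul, mul_one] at hnewton
  rw [hnewton, binomialTransform]
  refine sum_congr rfl fun j _ => ?_
  rw [binomialTransform_eq_neg_one_pow_mul_fwdDiff_iter, nsmul_eq_mul]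
  have hsq : (-1 : R) ^ j * (-1) ^ j = 1 := by rw [← mul_pow, mul_neg_one, neg_neg, one_pow]
  linear_combination ((m.choose j : R) * (fwdDiff 1)^[j] b 0) * hsq

end BinomialTransform

theorem Nat.choose_mul_choose_sub_comm (n j k : ℕ) :
    n.choose j * (n - j).choose k = n.choose k * (n - k).choose j := by
  have hj := Nat.choose_mul (n := n) (Nat.le_add_right j k)
  have hk := Nat.choose_mul (n := n) (Nat.le_add_left k j)
  rw [Nat.add_sub_cancel_left] at hj
  rw [Nat.add_sub_cancel] at hk
  rw [← hj, ← hk, Nat.choose_symm_add]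

theorem sum_range_choose_mul_sum_range_choose_comm {R : Type*} [CommSemiring R] (n : ℕ)
    (F : ℕ → ℕ → R) :
    ∑ j ∈ range (n + 1), ∑ k ∈ range (n - j + 1), (n.choose j * (n - j).choose k : R) * F j k =
      ∑ k ∈ range (n + 1), ∑ j ∈ range (n - k + 1), (n.choose k * (n - k).choose j : R) * F j k := by
  rw [sum_comm' (t' := range (n + 1)) (s' := fun k => range (n - k + 1))]
  · refine sum_congr rfl fun k _ => sum_congr rfl fun j _ => ?_
    rw [← Nat.cast_mul, ← Nat.cast_mul, Nat.choose_mul_choose_sub_comm]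
  · intro j k
    simp only [mem_range]
    omega

theorem appell_sub_add_mul_pow {R : Type*} [CommSemiring R] {f : ℕ → R → R}
    (hf : ∀ (n : ℕ) (u v : R),
      f n (u + v) = ∑ k ∈ range (n + 1), (n.choose k : R) * f k u * v ^ (n - k))
    {n j : ℕ} (hj : j ≤ n) (x y : R) :
    f (n - j) (x + y) * x ^ j =
      ∑ k ∈ range (n - j + 1), ((n - j).choose k : R) * (f k y * x ^ (n - k)) := by
  rw [add_comm, hf, sum_mul]
  refine sum_congr rfl fun k hk => ?_
  have hkj : k ≤ n - j := Nat.lt_succ_iff.mp (mem_range.mp hk)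
  rw [mul_assoc, mul_assoc, ← pow_add, show n - j - k + j = n - k by omega]

theorem appell_binomial_sum (a : ℕ → ℝ) (f : ℕ → ℝ → ℝ)
    (hf : ∀ (n : ℕ) (u v : ℝ),
      f n (u + v) = ∑ k ∈ range (n + 1), (n.choose k : ℝ) * f k u * v ^ (n - k))
    (x y : ℝ) (n : ℕ) :
    ∑ k ∈ range (n + 1), a k * (n.choose k : ℝ) * f k y * x ^ (n - k) =
      ∑ j ∈ range (n + 1), (-1 : ℝ) ^ j * (n.choose j : ℝ) *
        (∑ l ∈ range (j + 1), (-1 : ℝ) ^ l * (j.choose l : ℝ) * a (n - l)) *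
          f (n - j) (x + y) * x ^ j := by
  set M : ℕ → ℝ := binomialTransform fun l => a (n - l)
  calc ∑ k ∈ range (n + 1), a k * (n.choose k : ℝ) * f k y * x ^ (n - k)
      = ∑ k ∈ range (n + 1), ∑ j ∈ range (n - k + 1),
          (n.choose k * (n - k).choose j : ℝ) * ((-1) ^ j * M j * (f k y * x ^ (n - k))) := by
        refine sum_congr rfl fun k hk => ?_
        have hinv : a k = binomialTransform M (n - k) := by
          rw [binomialTransform_binomialTransform, Nat.sub_sub_self (mem_range_succ_iff.mp hk)]
        rw [hinv, binomialTransform, sum_mul, sum_mul, sum_mul]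
        exact sum_congr rfl fun j _ => by ring
    _ = ∑ j ∈ range (n + 1), ∑ k ∈ range (n - j + 1),
          (n.choose j * (n - j).choose k : ℝ) * ((-1) ^ j * M j * (f k y * x ^ (n - k))) :=
        (sum_range_choose_mul_sum_range_choose_comm n _).symm
    _ = ∑ j ∈ range (n + 1), (-1 : ℝ) ^ j * (n.choose j : ℝ) * M j * f (n - j) (x + y) * x ^ j := by
        refine sum_congr rfl fun j hj => ?_
        rw [mul_assoc _ (f _ _), appell_sub_add_mul_pow hf (mem_range_succ_iff.mp hj), mul_sum]
        exact sum_congr rfl fun k _ => by ring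
end
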